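/- Let p ≥ 3 be prime and suppose B satisfies Jenkins' identity. If p² ∣ D, then for all n ≥ 1, B(D, p^{2n}d) ≡ B(D/p², p^{2n−2}d) − (−d/p)·p^{n−1}·B(p^{2(n−1)}D, d) (mod pⁿ). -/

import Mathlib

open Finset

/-- Jenkins' identity for the traces of singular moduli `B(D,d)`, with the convention
`0⁰ = 1` and `B(a,b) = 0` for invalid arguments. -/
def JenkinsId (p : ℕ) [Fact p.Prime] (B : ℕ → ℕ → ℤ) : Prop :=
  ∀ D d n : ℕ, 1 ≤ n →
    B D (p ^ (2 * n) * d) =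
      (p : ℤ) ^ n * B (p ^ (2 * n) * D) d
        + ∑ k ∈ range n, (legendreSym p (D : ℤ)) ^ (n - k - 1) *
            ((if p ^ 2 ∣ D then B (D / p ^ 2) (p ^ (2 * k) * d) else 0)
              - (p : ℤ) ^ (k + 1) *
                (if p ^ 2 ∣ d then B (p ^ (2 * k) * D) (d / p ^ 2) else 0))
        + ∑ k ∈ range n, (legendreSym p (D : ℤ)) ^ (n - k - 1) *
            ((legendreSym p (D : ℤ) - legendreSym p (-(d : ℤ))) * (p : ℤ) ^ k *
              B (p ^ k * D) d)

/-!
As `p ∣ D`, the symbol `(D/p)` vanishes and both sums in Jenkins' identity collapse to their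
term `k = n - 1`; for `n = 1` this is the claim. For `n = k + 2`, the collapsed identity at level
`k + 1` applied to `p²d` (where also `(-p²d/p) = 0`) writes `B(D, p^{2n}d)` as
`B(D/p², p^{2n-2}d)` plus `p^{k+1}` times `B(p^{2k+2}D, p²d) - B(p^{2k}D, d)`, and the case
`n = 1` for the discriminant `p^{2k+2}D` determines this difference modulo `p`.
-/

theorem Finset.sum_range_zero_pow_mul {R : Type*} [Semiring R] {n : ℕ} (hn : 1 ≤ n)
    (f : ℕ → R) : ∑ k ∈ range n, (0 : R) ^ (n - k - 1) * f k = f (n - 1) := by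
  obtain ⟨m, rfl⟩ : ∃ m, n = m + 1 := ⟨n - 1, by omega⟩
  rw [sum_range_succ, sum_eq_zero fun k hk => by rw [zero_pow (by grind), zero_mul]]
  simp

theorem legendreSym_eq_zero_of_dvd {p : ℕ} [Fact p.Prime] {a : ℤ} (h : (p : ℤ) ∣ a) :
    legendreSym p a = 0 :=
  (legendreSym.eq_zero_iff p a).2 ((ZMod.intCast_zmod_eq_zero_iff_dvd a p).2 h)

namespace JenkinsId

variable {p : ℕ} [Fact p.Prime] {B : ℕ → ℕ → ℤ} {D : ℕ}

theorem eq_of_sq_dvd (hJ : JenkinsId p B) (hD : p ^ 2 ∣ D) (d : ℕ) {n : ℕ} (hn : 1 ≤ n) :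
    B D (p ^ (2 * n) * d) =
      (p : ℤ) ^ n * (B (p ^ (2 * n) * D) d
          - if p ^ 2 ∣ d then B (p ^ (2 * (n - 1)) * D) (d / p ^ 2) else 0)
        + B (D / p ^ 2) (p ^ (2 * (n - 1)) * d)
        - legendreSym p (-(d : ℤ)) * (p : ℤ) ^ (n - 1) * B (p ^ (n - 1) * D) d := by
  have hDp : legendreSym p (D : ℤ) = 0 :=
    legendreSym_eq_zero_of_dvd (Int.natCast_dvd_natCast.2 ((dvd_pow_self p two_ne_zero).trans hD))
  have h := hJ D d n hn
  rw [hDp, sum_range_zero_pow_mul hn, sum_range_zero_pow_mul hn, if_pos hD,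
    Nat.sub_add_cancel hn] at h
  linear_combination h

theorem sq_mul_modEq (hJ : JenkinsId p B) (hD : p ^ 2 ∣ D) (d : ℕ) :
    B D (p ^ 2 * d) ≡ B (D / p ^ 2) d - legendreSym p (-(d : ℤ)) * B D d [ZMOD p] := by
  have h := hJ.eq_of_sq_dvd hD d le_rfl
  simp only [mul_one, Nat.sub_self, mul_zero, pow_zero, one_mul, pow_one] at h
  rw [h, add_sub_assoc, add_comm]
  exact Int.modEq_add_fac_self

theorem eq_of_sq_dvd_sq_mul (hJ : JenkinsId p B) (hD : p ^ 2 ∣ D) (d k : ℕ) :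
    B D (p ^ (2 * (k + 2)) * d) =
      (p : ℤ) ^ (k + 1) * (B (p ^ (2 * (k + 1)) * D) (p ^ 2 * d) - B (p ^ (2 * k) * D) d)
        + B (D / p ^ 2) (p ^ (2 * (k + 1)) * d) := by
  have hpd : legendreSym p (-((p ^ 2 * d : ℕ) : ℤ)) = 0 := legendreSym_eq_zero_of_dvd <| by
    push_cast
    exact (dvd_mul_of_dvd_left (dvd_pow_self _ two_ne_zero) _).neg_right
  have h := hJ.eq_of_sq_dvd hD (p ^ 2 * d) (Nat.le_add_left 1 k)
  rw [hpd, if_pos (dvd_mul_right _ _), Nat.mul_div_cancel_left d (Nat.pos_of_neZero _),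
    Nat.add_sub_cancel] at h
  rw [show p ^ (2 * (k + 2)) * d = p ^ (2 * (k + 1)) * (p ^ 2 * d) by ring, h,
    show p ^ (2 * k) * (p ^ 2 * d) = p ^ (2 * (k + 1)) * d by ring]
  ring

theorem sq_mul_sub_modEq (hJ : JenkinsId p B) (hD : p ^ 2 ∣ D) (d k : ℕ) :
    B (p ^ (2 * (k + 1)) * D) (p ^ 2 * d) - B (p ^ (2 * k) * D) d ≡
      -(legendreSym p (-(d : ℤ)) * B (p ^ (2 * (k + 1)) * D) d) [ZMOD p] := by
  have h := hJ.sq_mul_modEq (hD.mul_left (p ^ (2 * (k + 1)))) d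
  rw [Nat.div_eq_of_eq_mul_left (Nat.pos_of_neZero _)
    (by ring : p ^ (2 * (k + 1)) * D = p ^ (2 * k) * D * p ^ 2)] at h
  simpa using h.sub_right (B (p ^ (2 * k) * D) d)

end JenkinsId

theorem jenkins_p_sq_divides_D_general (p : ℕ) [Fact p.Prime]
    (B : ℕ → ℕ → ℤ) (hJ : JenkinsId p B) (D : ℕ) (hp2D : p ^ 2 ∣ D) :
    ∀ d n : ℕ, 1 ≤ n →
      B D (p ^ (2 * n) * d) ≡
        B (D / p ^ 2) (p ^ (2 * n - 2) * d)
          - legendreSym p (-(d : ℤ)) * (p : ℤ) ^ (n - 1) * B (p ^ (2 * (n - 1)) * D) d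
        [ZMOD (p : ℤ) ^ n] := by
  intro d n hn
  obtain rfl | ⟨k, rfl⟩ : n = 1 ∨ ∃ k, n = k + 2 := by
    rcases n with _ | _ | k <;> simp_all
  · simpa using hJ.sq_mul_modEq hp2D d
  rw [hJ.eq_of_sq_dvd_sq_mul hp2D, show 2 * (k + 2) - 2 = 2 * (k + 1) by omega,
    show k + 2 - 1 = k + 1 by omega, pow_succ _ (k + 1)]
  calc _ ≡ (p : ℤ) ^ (k + 1) * -(legendreSym p (-(d : ℤ)) * B (p ^ (2 * (k + 1)) * D) d)
          + B (D / p ^ 2) (p ^ (2 * (k + 1)) * d) [ZMOD (p : ℤ) ^ (k + 1) * p] :=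
        ((hJ.sq_mul_sub_modEq hp2D d k).mul_left').add_right _
    _ = _ := by ring

/-- If `p² ∣ D`, then for all `n ≥ 1`,
`B(D, p^{2n}d) ≡ B(D/p², p^{2n−2}d) − (−d/p)·p^{n−1}·B(p^{2(n−1)}D, d) (mod pⁿ)`. -/
theorem jenkins_p_sq_divides_D (p : ℕ) [Fact p.Prime] (hp3 : 3 ≤ p)
    (B : ℕ → ℕ → ℤ) (hJ : JenkinsId p B) (D : ℕ) (hp2D : p ^ 2 ∣ D) :
    ∀ d n : ℕ, 1 ≤ n →
      B D (p ^ (2 * n) * d) ≡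
        B (D / p ^ 2) (p ^ (2 * n - 2) * d)
          - legendreSym p (-(d : ℤ)) * (p : ℤ) ^ (n - 1) * B (p ^ (2 * (n - 1)) * D) d
        [ZMOD (p : ℤ) ^ n] :=
  jenkins_p_sq_divides_D_general p B hJ D hp2D
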